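/- Let σ > 0, μ ∈ ℝ, λ = 2μ/σ², let h : ℝ → ℝ be continuous, let d < u be reals, let k > 0 and ℓ > 0, and let m ∈ ℝ. Define d₁ = e^{λ(m−d)}, d₂ = e^{λ(m−u)}, e₁ = −(2/σ²) ∫_m^d e^{λ(y−d)} dy, e₂ = (2/σ²) ∫_m^u e^{λ(y−u)} dy, f₁ = −(2/σ²) ∫_m^d h(y) e^{λ(y−d)} dy, and f₂ = (2/σ²) ∫_m^u h(y) e^{λ(y−u)} dy. Assume d₁e₂ + d₂e₁ ≠ 0 and set γ = (d₁(f₂ + ℓ) + d₂(f₁ + k))/(d₁e₂ + d₂e₁) and v = (e₁(f₂ + ℓ) − e₂(f₁ + k))/(d₁e₂ + d₂e₁). Define g(x) = v e^{λ(m−x)} + γ(2/σ²) ∫_m^x e^{λ(y−x)} dy − (2/σ²) ∫_m^x h(y) e^{λ(y−x)} dy and V(x) = ∫_m^x g(y) dy. Then V is twice continuously differentiable and satisfies (σ²/2)V''(x) + μV'(x) + h(x) = γ for every x ∈ [d, u], together with the Neumann boundary conditions V'(d) = −k and V'(u) = ℓ. -/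

import Mathlib

/-!
`g = V'` is built by variation of constants so that it solves the first-order linear equation
`g' = -λ g + (2/σ²)(γ - h)`, which is the Poisson equation `(σ²/2) V'' + μ V' + h = γ` once
`λ = 2μ/σ²`. At the endpoints, `g(d) = v d₁ - γ e₁ + f₁` and `g(u) = v d₂ + γ e₂ - f₂` are affine
in the unknowns `(v, γ)`, and the given formulas for `γ` and `v` are Cramer's rule for the
linear system `g(d) = -k`, `g(u) = ℓ`.
-/

open MeasureTheory Set Filter

noncomputable section

def D1 (lam m d : ℝ) : ℝ := Real.exp (lam * (m - d))

def D2 (lam m u : ℝ) : ℝ := Real.exp (lam * (m - u))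

def E1 (σ lam m d : ℝ) : ℝ := -(2 / σ ^ 2) * ∫ y in m..d, Real.exp (lam * (y - d))

def E2 (σ lam m u : ℝ) : ℝ := (2 / σ ^ 2) * ∫ y in m..u, Real.exp (lam * (y - u))

def F1 (σ lam m d : ℝ) (h : ℝ → ℝ) : ℝ :=
  -(2 / σ ^ 2) * ∫ y in m..d, h y * Real.exp (lam * (y - d))

def F2 (σ lam m u : ℝ) (h : ℝ → ℝ) : ℝ :=
  (2 / σ ^ 2) * ∫ y in m..u, h y * Real.exp (lam * (y - u))

def gee (σ lam m γ v : ℝ) (h : ℝ → ℝ) (x : ℝ) : ℝ :=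
  v * Real.exp (lam * (m - x)) + γ * (2 / σ ^ 2) * (∫ y in m..x, Real.exp (lam * (y - x))) -
    (2 / σ ^ 2) * ∫ y in m..x, h y * Real.exp (lam * (y - x))

def Vee (σ lam m γ v : ℝ) (h : ℝ → ℝ) (x : ℝ) : ℝ := ∫ y in m..x, gee σ lam m γ v h y

theorem integral_mul_exp_sub_eq (f : ℝ → ℝ) (lam m x : ℝ) :
    ∫ y in m..x, f y * Real.exp (lam * (y - x)) =
      (∫ y in m..x, f y * Real.exp (lam * y)) * Real.exp (-(lam * x)) := by
  rw [← intervalIntegral.integral_mul_const]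
  congr 1 with y
  rw [mul_assoc, ← Real.exp_add]
  ring_nf

theorem hasDerivAt_integral_mul_exp_sub {f : ℝ → ℝ} (hf : Continuous f) (lam m x : ℝ) :
    HasDerivAt (fun x => ∫ y in m..x, f y * Real.exp (lam * (y - x)))
      (f x - lam * ∫ y in m..x, f y * Real.exp (lam * (y - x))) x := by
  have hF : HasDerivAt (fun x => ∫ y in m..x, f y * Real.exp (lam * y))
      (f x * Real.exp (lam * x)) x :=
    ((hf.mul (by fun_prop)).integral_hasStrictDerivAt m x).hasDerivAt
  have hE : HasDerivAt (fun x => Real.exp (-(lam * x))) (Real.exp (-(lam * x)) * -lam) x := by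
    simpa using ((hasDerivAt_id x).const_mul lam).neg.exp
  simp only [integral_mul_exp_sub_eq]
  refine (hF.mul hE).congr_deriv ?_
  rw [mul_assoc (f x), ← Real.exp_add, add_neg_cancel, Real.exp_zero]
  ring

section

variable {σ lam m γ v : ℝ} {h : ℝ → ℝ}

theorem hasDerivAt_gee (hh : Continuous h) (x : ℝ) :
    HasDerivAt (gee σ lam m γ v h) (-lam * gee σ lam m γ v h x + 2 / σ ^ 2 * (γ - h x)) x := by
  have hexp : HasDerivAt (fun x => Real.exp (lam * (m - x)))
      (Real.exp (lam * (m - x)) * (lam * -1)) x :=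
    (((hasDerivAt_id x).const_sub m).const_mul lam).exp
  have hone := hasDerivAt_integral_mul_exp_sub (f := fun _ => (1 : ℝ)) continuous_const lam m x
  simp only [one_mul] at hone
  have hh' := hasDerivAt_integral_mul_exp_sub hh lam m x
  refine ((hexp.const_mul v).add (hone.const_mul (γ * (2 / σ ^ 2)))).sub
    (hh'.const_mul (2 / σ ^ 2)) |>.congr_deriv ?_
  simp only [gee]
  ring

theorem continuous_gee (hh : Continuous h) : Continuous (gee σ lam m γ v h) :=
  continuous_iff_continuousAt.2 fun x => (hasDerivAt_gee hh x).continuousAt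

theorem deriv_gee (hh : Continuous h) :
    deriv (gee σ lam m γ v h) = fun x => -lam * gee σ lam m γ v h x + 2 / σ ^ 2 * (γ - h x) :=
  funext fun x => (hasDerivAt_gee hh x).deriv

theorem contDiff_one_gee (hh : Continuous h) : ContDiff ℝ 1 (gee σ lam m γ v h) := by
  refine contDiff_one_iff_deriv.2 ⟨fun x => (hasDerivAt_gee hh x).differentiableAt, ?_⟩
  rw [deriv_gee hh]
  exact (continuous_const.mul (continuous_gee hh)).add
    (continuous_const.mul (continuous_const.sub hh))

theorem hasDerivAt_Vee (hh : Continuous h) (x : ℝ) :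
    HasDerivAt (Vee σ lam m γ v h) (gee σ lam m γ v h x) x :=
  ((continuous_gee hh).integral_hasStrictDerivAt m x).hasDerivAt

theorem deriv_Vee (hh : Continuous h) : deriv (Vee σ lam m γ v h) = gee σ lam m γ v h :=
  funext fun x => (hasDerivAt_Vee hh x).deriv

theorem contDiff_two_Vee (hh : Continuous h) : ContDiff ℝ 2 (Vee σ lam m γ v h) := by
  rw [show (2 : WithTop ℕ∞) = 1 + 1 by norm_num]
  refine contDiff_succ_iff_deriv.2
    ⟨fun x => (hasDerivAt_Vee hh x).differentiableAt, by simp, ?_⟩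
  rw [deriv_Vee hh]
  exact contDiff_one_gee hh

theorem gee_left (d : ℝ) :
    gee σ lam m γ v h d = v * D1 lam m d - γ * E1 σ lam m d + F1 σ lam m d h := by
  simp only [gee, D1, E1, F1]
  ring

theorem gee_right (u : ℝ) :
    gee σ lam m γ v h u = v * D2 lam m u + γ * E2 σ lam m u - F2 σ lam m u h := by
  simp only [gee, D2, E2, F2]
  ring

end

theorem boundary_system_of_cramer {K : Type*} [Field K] {D₁ D₂ E₁ E₂ F₁ F₂ k ℓ γ v : K}
    (hΔ : D₁ * E₂ + D₂ * E₁ ≠ 0)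
    (hγ : γ = (D₁ * (F₂ + ℓ) + D₂ * (F₁ + k)) / (D₁ * E₂ + D₂ * E₁))
    (hv : v = (E₁ * (F₂ + ℓ) - E₂ * (F₁ + k)) / (D₁ * E₂ + D₂ * E₁)) :
    v * D₁ - γ * E₁ + F₁ = -k ∧ v * D₂ + γ * E₂ - F₂ = ℓ := by
  subst hγ hv
  constructor
  · linear_combination (-(F₁ + k)) * mul_inv_cancel₀ hΔ
  · linear_combination (F₂ + ℓ) * mul_inv_cancel₀ hΔ

theorem stmt18_general (σ μ : ℝ) (hσ : 0 < σ) (h : ℝ → ℝ) (hcont : Continuous h)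
    (d u k ℓ m : ℝ) :
    ∀ lam : ℝ, lam = 2 * μ / σ ^ 2 →
    D1 lam m d * E2 σ lam m u + D2 lam m u * E1 σ lam m d ≠ 0 →
    ∀ γ v : ℝ,
      γ = (D1 lam m d * (F2 σ lam m u h + ℓ) + D2 lam m u * (F1 σ lam m d h + k)) /
          (D1 lam m d * E2 σ lam m u + D2 lam m u * E1 σ lam m d) →
      v = (E1 σ lam m d * (F2 σ lam m u h + ℓ) - E2 σ lam m u * (F1 σ lam m d h + k)) /
          (D1 lam m d * E2 σ lam m u + D2 lam m u * E1 σ lam m d) →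
      ContDiff ℝ 2 (Vee σ lam m γ v h) ∧
      (∀ x ∈ Set.Icc d u,
        σ ^ 2 / 2 * deriv (deriv (Vee σ lam m γ v h)) x +
          μ * deriv (Vee σ lam m γ v h) x + h x = γ) ∧
      deriv (Vee σ lam m γ v h) d = -k ∧
      deriv (Vee σ lam m γ v h) u = ℓ := by
  intro lam hlam hΔ γ v hγ hv
  obtain ⟨hd, hu⟩ := boundary_system_of_cramer hΔ hγ hv
  refine ⟨contDiff_two_Vee hcont, fun x _ => ?_, ?_, ?_⟩
  · have hσ0 := hσ.ne'
    rw [deriv_Vee hcont, deriv_gee hcont, hlam]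
    field_simp
    ring
  · rw [deriv_Vee hcont, gee_left, hd]
  · rw [deriv_Vee hcont, gee_right, hu]

theorem stmt18 (σ μ : ℝ) (hσ : 0 < σ) (h : ℝ → ℝ) (hcont : Continuous h)
    (d u k ℓ m : ℝ) (hdu : d < u) (hk : 0 < k) (hl : 0 < ℓ) :
    ∀ lam : ℝ, lam = 2 * μ / σ ^ 2 →
    D1 lam m d * E2 σ lam m u + D2 lam m u * E1 σ lam m d ≠ 0 →
    ∀ γ v : ℝ,
      γ = (D1 lam m d * (F2 σ lam m u h + ℓ) + D2 lam m u * (F1 σ lam m d h + k)) /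
          (D1 lam m d * E2 σ lam m u + D2 lam m u * E1 σ lam m d) →
      v = (E1 σ lam m d * (F2 σ lam m u h + ℓ) - E2 σ lam m u * (F1 σ lam m d h + k)) /
          (D1 lam m d * E2 σ lam m u + D2 lam m u * E1 σ lam m d) →
      ContDiff ℝ 2 (Vee σ lam m γ v h) ∧
      (∀ x ∈ Set.Icc d u,
        σ ^ 2 / 2 * deriv (deriv (Vee σ lam m γ v h)) x +
          μ * deriv (Vee σ lam m γ v h) x + h x = γ) ∧
      deriv (Vee σ lam m γ v h) d = -k ∧
      deriv (Vee σ lam m γ v h) u = ℓ :=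
  stmt18_general σ μ hσ h hcont d u k ℓ m
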